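/- arXiv:2008.03053 — 8 statements merged into one kernel-verified Lean document; each statement's English description precedes it below -/
import Mathlib

section
/- If S is the set of size k produced by the greedy algorithm that at each step adds a vertex maximizing the marginal gain of g, and S* is an optimal set of size k maximizing g, then g(S) ≥ (1 − 1/e) · g(S*). -/
/-!
If `S` is the current greedy set and `S*` the optimum, submodularity gives
`g S* ≤ g (S ∪ S*) ≤ g S + ∑_{x ∈ S*} (gain of x at S) ≤ g S + k · (greedy gain)`,
so each greedy step closes at least a `1/k` fraction of the gap `g S* - g S`.
After `k` steps the gap is at most `(1 - 1/k)^k · g S* ≤ e⁻¹ · g S*`.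
-/

open Finset

section Submodular

variable {V : Type*} [DecidableEq V] (g : Finset V → ℝ)

def marginalGain (S : Finset V) (x : V) : ℝ := g (insert x S) - g S

variable {g}

lemma marginalGain_nonneg (hmono : ∀ S T : Finset V, S ⊆ T → g S ≤ g T)
    (S : Finset V) (x : V) : 0 ≤ marginalGain g S x :=
  sub_nonneg.2 (hmono _ _ (subset_insert x S))

lemma marginalGain_of_mem {S : Finset V} {x : V} (hx : x ∈ S) : marginalGain g S x = 0 := by
  simp [marginalGain, insert_eq_of_mem hx]

lemma le_add_sum_marginalGain
    (hsub : ∀ (S T : Finset V) (x : V), S ⊆ T → x ∉ T →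
      marginalGain g T x ≤ marginalGain g S x)
    (S T : Finset V) : g (S ∪ T) ≤ g S + ∑ x ∈ T, marginalGain g S x := by
  induction T using Finset.induction_on with
  | empty => simp
  | @insert a T haT ih =>
    rw [sum_insert haT, union_insert]
    by_cases ha : a ∈ S ∪ T
    · rcases mem_union.1 ha with haS | haT'
      · rw [insert_eq_of_mem ha, marginalGain_of_mem haS]
        linarith
      · exact absurd haT' haT
    · have hgain : g (insert a (S ∪ T)) - g (S ∪ T) ≤ marginalGain g S a :=
        hsub S (S ∪ T) a subset_union_left ha
      linarith

lemma sub_le_card_mul_marginalGain (hmono : ∀ S T : Finset V, S ⊆ T → g S ≤ g T)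
    (hsub : ∀ (S T : Finset V) (x : V), S ⊆ T → x ∉ T →
      marginalGain g T x ≤ marginalGain g S x)
    {S : Finset V} {x : V} (hmax : ∀ y ∉ S, marginalGain g S y ≤ marginalGain g S x)
    (T : Finset V) : g T - g S ≤ #T * marginalGain g S x := by
  have hsum : ∑ y ∈ T, marginalGain g S y ≤ #T * marginalGain g S x := by
    rw [← nsmul_eq_mul, ← sum_const]
    refine sum_le_sum fun y _ => ?_
    by_cases hy : y ∈ S
    · rw [marginalGain_of_mem hy]
      exact marginalGain_nonneg hmono S x
    · exact hmax y hy
  linarith [hmono T (S ∪ T) subset_union_right, le_add_sum_marginalGain hsub S T]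

end Submodular

theorem stmt_3_general {V : Type*} [DecidableEq V]
    (g : Finset V → ℝ) (hempty : g (∅ : Finset V) = 0)
    (hmono : ∀ S T : Finset V, S ⊆ T → g S ≤ g T)
    (hsub : ∀ (S T : Finset V) (x : V), S ⊆ T → x ∉ T →
      g (insert x T) - g T ≤ g (insert x S) - g S)
    (k : ℕ)
    (Sseq : ℕ → Finset V) (h0 : Sseq 0 = ∅)
    (hgreedy : ∀ i < k, ∃ x ∉ Sseq i, Sseq (i + 1) = insert x (Sseq i) ∧
      ∀ y ∉ Sseq i,
        g (insert y (Sseq i)) - g (Sseq i) ≤ g (insert x (Sseq i)) - g (Sseq i))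
    (Sstar : Finset V) (hcard : Sstar.card = k) :
    (1 - 1 / Real.exp 1) * g Sstar ≤ g (Sseq k) := by
  obtain rfl | hk := Nat.eq_zero_or_pos k
  · simp [card_eq_zero.1 hcard, h0, hempty]
  have hk' : (1 : ℝ) ≤ k := by exact_mod_cast hk
  have hgap_step : ∀ i < k, g Sstar - g (Sseq (i + 1)) ≤ (1 - 1 / k) * (g Sstar - g (Sseq i)) := by
    intro i hi
    obtain ⟨x, -, hnext, hmax⟩ := hgreedy i hi
    have hgain : g Sstar - g (Sseq i) ≤ k * (g (Sseq (i + 1)) - g (Sseq i)) := by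
      simpa only [hcard, marginalGain, ← hnext] using
        sub_le_card_mul_marginalGain hmono hsub hmax Sstar
    field_simp
    linarith
  have hgap := le_geom (u := fun i => g Sstar - g (Sseq i))
    (sub_nonneg.2 (div_le_one_of_le₀ hk' k.cast_nonneg)) k hgap_step
  have hexp : (1 - 1 / (k : ℝ)) ^ k ≤ 1 / Real.exp 1 := by
    simpa [Real.exp_neg] using Real.one_sub_div_pow_le_exp_neg hk'
  have hopt_nonneg : 0 ≤ g Sstar := hempty ▸ hmono ∅ Sstar (empty_subset _)
  simp only [h0, hempty, sub_zero] at hgap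
  nlinarith [mul_le_mul_of_nonneg_right hexp hopt_nonneg]

/-- Greedy gives a `(1 - 1/e)`-approximation for maximizing a monotone
submodular function `g` with `g ∅ = 0` under a cardinality constraint `k`. -/
theorem stmt_3 {V : Type*} [Fintype V] [DecidableEq V]
    (g : Finset V → ℝ) (hnonneg : ∀ S, 0 ≤ g S) (hempty : g (∅ : Finset V) = 0)
    (hmono : ∀ S T : Finset V, S ⊆ T → g S ≤ g T)
    (hsub : ∀ (S T : Finset V) (x : V), S ⊆ T → x ∉ T →
      g (insert x T) - g T ≤ g (insert x S) - g S)
    (k : ℕ)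
    (Sseq : ℕ → Finset V) (h0 : Sseq 0 = ∅)
    (hgreedy : ∀ i < k, ∃ x ∉ Sseq i, Sseq (i + 1) = insert x (Sseq i) ∧
      ∀ y ∉ Sseq i,
        g (insert y (Sseq i)) - g (Sseq i) ≤ g (insert x (Sseq i)) - g (Sseq i))
    (Sstar : Finset V) (hcard : Sstar.card = k)
    (hopt : ∀ S' : Finset V, S'.card = k → g S' ≤ g Sstar) :
    (1 - 1 / Real.exp 1) * g Sstar ≤ g (Sseq k) :=
  stmt_3_general g hempty hmono hsub k Sseq h0 hgreedy Sstar hcard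
end

section
/- For a monotone submodular function g with g(∅)=0, after i greedy steps the greedy set S_i satisfies g(S*) − g(S_i) ≤ (1 − 1/k)^i · g(S*), where S* is an optimal set of size k. -/
lemma union_marginal {V : Type*} [DecidableEq V]
    (g : Finset V → ℝ)
    (hmono : ∀ S T : Finset V, S ⊆ T → g S ≤ g T)
    (hsub : ∀ (S T : Finset V) (x : V), S ⊆ T → x ∉ T →
      g (insert x T) - g T ≤ g (insert x S) - g S)
    (S : Finset V) (T : Finset V) :
    g (S ∪ T) - g S ≤ ∑ x ∈ T, (g (insert x S) - g S) := by
  classical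
  induction T using Finset.induction with
  | empty => simp
  | @insert a T ha ih =>
    rw [Finset.sum_insert ha]
    by_cases hmem : a ∈ S ∪ T
    · have h1 : S ∪ insert a T = S ∪ T := by
        ext y; simp only [Finset.mem_union, Finset.mem_insert]
        constructor
        · rintro (h | rfl | h)
          · exact Or.inl h
          · simpa using hmem
          · exact Or.inr h
        · rintro (h | h); exact Or.inl h; exact Or.inr (Or.inr h)
      rw [h1]
      have h2 : 0 ≤ g (insert a S) - g S :=
        sub_nonneg.mpr (hmono _ _ (Finset.subset_insert _ _))
      linarith
    · have h1 : S ∪ insert a T = insert a (S ∪ T) := by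
        ext y; simp [Finset.mem_union, Finset.mem_insert]
      rw [h1]
      have h2 := hsub S (S ∪ T) a Finset.subset_union_left hmem
      linarith

/-- For a monotone submodular `g` with `g ∅ = 0`, after `i` greedy steps,
`g S* − g (S_i) ≤ (1 − 1/k)^i · g S*` where `S*` is an optimal set of size `k`. -/
theorem stmt_4 {V : Type*} [Fintype V] [DecidableEq V]
    (g : Finset V → ℝ) (hnonneg : ∀ S, 0 ≤ g S) (hempty : g (∅ : Finset V) = 0)
    (hmono : ∀ S T : Finset V, S ⊆ T → g S ≤ g T)
    (hsub : ∀ (S T : Finset V) (x : V), S ⊆ T → x ∉ T →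
      g (insert x T) - g T ≤ g (insert x S) - g S)
    (k : ℕ) (hk : 0 < k)
    (Sseq : ℕ → Finset V) (h0 : Sseq 0 = ∅)
    (hgreedy : ∀ i < k, ∃ x ∉ Sseq i, Sseq (i + 1) = insert x (Sseq i) ∧
      ∀ y ∉ Sseq i,
        g (insert y (Sseq i)) - g (Sseq i) ≤ g (insert x (Sseq i)) - g (Sseq i))
    (Sstar : Finset V) (hcard : Sstar.card = k)
    (hopt : ∀ S' : Finset V, S'.card = k → g S' ≤ g Sstar)
    (i : ℕ) (hi : i ≤ k) :
    g Sstar - g (Sseq i) ≤ (1 - 1 / (k : ℝ)) ^ i * g Sstar := by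
  have hkR : (0 : ℝ) < k := by exact_mod_cast hk
  have hfac : (0 : ℝ) ≤ 1 - 1 / k := by
    rw [sub_nonneg, div_le_one hkR]
    exact_mod_cast hk
  induction i with
  | zero => simp [h0, hempty]
  | succ i ih =>
    have hik : i < k := hi
    have ihi : g Sstar - g (Sseq i) ≤ (1 - 1 / (k : ℝ)) ^ i * g Sstar :=
      ih (le_of_lt hik)
    obtain ⟨x, hx, hstep, hmax⟩ := hgreedy i hik
    set M := g (insert x (Sseq i)) - g (Sseq i) with hM
    have hM0 : 0 ≤ M := sub_nonneg.mpr (hmono _ _ (Finset.subset_insert _ _))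
    -- each marginal ≤ M
    have hsum : ∑ y ∈ Sstar, (g (insert y (Sseq i)) - g (Sseq i)) ≤ k * M := by
      calc ∑ y ∈ Sstar, (g (insert y (Sseq i)) - g (Sseq i))
          ≤ ∑ _y ∈ Sstar, M := by
            apply Finset.sum_le_sum
            intro y _
            by_cases hy : y ∈ Sseq i
            · rw [Finset.insert_eq_self.mpr hy]; simpa using hM0
            · exact hmax y hy
        _ = k * M := by rw [Finset.sum_const, hcard, nsmul_eq_mul]
    have hkey : g Sstar - g (Sseq i) ≤ k * M := by
      have h1 : g Sstar ≤ g (Sseq i ∪ Sstar) :=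
        hmono _ _ Finset.subset_union_right
      have h2 := union_marginal g hmono hsub (Sseq i) Sstar
      linarith
    have hnext : g Sstar - g (Sseq (i + 1)) ≤ (1 - 1 / (k : ℝ)) * (g Sstar - g (Sseq i)) := by
      rw [hstep]
      have : (1 - 1 / (k : ℝ)) * (g Sstar - g (Sseq i))
          = (g Sstar - g (Sseq i)) - (1 / k) * (g Sstar - g (Sseq i)) := by ring
      rw [this]
      have h3 : (1 / (k : ℝ)) * (g Sstar - g (Sseq i)) ≤ M := by
        rw [div_mul_eq_mul_div, one_mul, div_le_iff₀ hkR]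
        linarith [hkey]
      linarith
    calc g Sstar - g (Sseq (i + 1))
        ≤ (1 - 1 / (k : ℝ)) * (g Sstar - g (Sseq i)) := hnext
      _ ≤ (1 - 1 / (k : ℝ)) * ((1 - 1 / (k : ℝ)) ^ i * g Sstar) :=
          mul_le_mul_of_nonneg_left ihi hfac
      _ = (1 - 1 / (k : ℝ)) ^ (i + 1) * g Sstar := by ring
end

section
/- For a monotone submodular set function g, if S* is an optimal set of size k and S is any set, then there exists an element x ∈ S* \ S with marginal gain g(S ∪ {x}) − g(S) ≥ (g(S*) − g(S)) / k. -/
lemma telescope_aux {V : Type*} [DecidableEq V]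
    (g : Finset V → ℝ)
    (hsub : ∀ (S T : Finset V) (x : V), S ⊆ T → x ∉ T →
      g (insert x T) - g T ≤ g (insert x S) - g S)
    (S : Finset V) (D : Finset V) (hD : ∀ x ∈ D, x ∉ S) :
    g (S ∪ D) - g S ≤ ∑ x ∈ D, (g (insert x S) - g S) := by
  classical
  induction D using Finset.induction_on with
  | empty => simp
  | @insert a D' ha ih =>
    have haS : a ∉ S := hD a (Finset.mem_insert_self a D')
    have haSD : a ∉ S ∪ D' := by simp [haS, ha]
    have hstep : g (insert a (S ∪ D')) - g (S ∪ D') ≤ g (insert a S) - g S :=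
      hsub S (S ∪ D') a Finset.subset_union_left haSD
    have hunion : S ∪ insert a D' = insert a (S ∪ D') := by
      ext y; simp [or_comm, or_assoc, Finset.mem_insert]
    rw [hunion, Finset.sum_insert ha]
    have ih' := ih (fun x hx => hD x (Finset.mem_insert_of_mem hx))
    linarith

/-- For a monotone submodular `g`, if `S*` is an optimal set of size `k` and `S`
is any set with `S* ⊄ S`, then some `x ∈ S* \ S` has marginal gain at least
`(g S* − g S)/k`. -/
theorem stmt_5 {V : Type*} [DecidableEq V]
    (g : Finset V → ℝ) (hnonneg : ∀ S, 0 ≤ g S)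
    (hmono : ∀ S T : Finset V, S ⊆ T → g S ≤ g T)
    (hsub : ∀ (S T : Finset V) (x : V), S ⊆ T → x ∉ T →
      g (insert x T) - g T ≤ g (insert x S) - g S)
    (k : ℕ) (Sstar : Finset V) (hcard : Sstar.card = k)
    (S : Finset V) (hns : ¬ Sstar ⊆ S) :
    ∃ x ∈ Sstar \ S, (g Sstar - g S) / (k : ℝ) ≤ g (insert x S) - g S := by
  classical
  set D := Sstar \ S with hDdef
  have hDne : D.Nonempty := by
    rw [Finset.sdiff_nonempty]; exact hns
  by_cases hpos : g Sstar - g S ≤ 0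
  · obtain ⟨x, hx⟩ := hDne
    refine ⟨x, hx, ?_⟩
    have h1 : (g Sstar - g S) / (k : ℝ) ≤ 0 :=
      div_nonpos_of_nonpos_of_nonneg hpos (Nat.cast_nonneg k)
    have h2 : 0 ≤ g (insert x S) - g S := by
      have := hmono S (insert x S) (Finset.subset_insert x S)
      linarith
    linarith
  · push_neg at hpos
    have hDsub : ∀ x ∈ D, x ∉ S := fun x hx => (Finset.mem_sdiff.mp hx).2
    have htel : g (S ∪ D) - g S ≤ ∑ x ∈ D, (g (insert x S) - g S) :=
      telescope_aux g hsub S D hDsub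
    have hSstar : Sstar ⊆ S ∪ D := by
      intro y hy
      by_cases hyS : y ∈ S
      · exact Finset.mem_union_left _ hyS
      · exact Finset.mem_union_right _ (Finset.mem_sdiff.mpr ⟨hy, hyS⟩)
    have hsum : g Sstar - g S ≤ ∑ x ∈ D, (g (insert x S) - g S) := by
      have := hmono Sstar (S ∪ D) hSstar
      linarith
    have hDcard : (D.card : ℝ) ≤ (k : ℝ) := by
      exact_mod_cast hcard ▸ Finset.card_le_card (Finset.sdiff_subset)
    have hk0 : (0 : ℝ) < (k : ℝ) := by
      have h1 : 0 < D.card := Finset.card_pos.mpr hDne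
      have : (0 : ℝ) < (D.card : ℝ) := by exact_mod_cast h1
      linarith
    by_contra hcon
    push_neg at hcon
    have hlt : ∑ x ∈ D, (g (insert x S) - g S) <
        ∑ _x ∈ D, (g Sstar - g S) / (k : ℝ) :=
      Finset.sum_lt_sum_of_nonempty hDne (fun x hx => hcon x hx)
    rw [Finset.sum_const, nsmul_eq_mul] at hlt
    have hle : (D.card : ℝ) * ((g Sstar - g S) / (k : ℝ)) ≤ g Sstar - g S := by
      have h1 : (D.card : ℝ) * ((g Sstar - g S) / (k : ℝ)) ≤
          (k : ℝ) * ((g Sstar - g S) / (k : ℝ)) :=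
        mul_le_mul_of_nonneg_right hDcard (div_nonneg hpos.le hk0.le)
      have h2 : (k : ℝ) * ((g Sstar - g S) / (k : ℝ)) = g Sstar - g S := by
        field_simp
      linarith
    linarith
end

section
/- Let v₁ < v₂ < ⋯ < v_m be vertices of a rooted tree sorted by preorder. Then for any nonempty subset W ⊆ {v₁,…,v_m}, LCA(W) equals LCA(v_i, v_{i+1}) for some consecutive pair 1 ≤ i < m (or W is a singleton and LCA(W) ∈ W). In particular, LCA(W) = LCA(first(W), last(W)) where first and last are taken in preorder. -/
/-- For `v₁ < ⋯ < v_m` sorted by preorder and any nonempty `W ⊆ {v₁,…,v_m}`,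
`LCA(W)` equals the LCA of some preorder-consecutive pair (or `W` is a
singleton with `LCA(W) ∈ W`); in particular `LCA(W) = LCA(first W, last W)`. -/
theorem stmt_9 {V : Type*} [DecidableEq V]
    (isAnc : V → V → Prop)
    (hrefl : ∀ v, isAnc v v)
    (hantisymm : ∀ u v, isAnc u v → isAnc v u → u = v)
    (htrans : ∀ u v w, isAnc u v → isAnc v w → isAnc u w)
    (pos : V → ℕ) (hposinj : Function.Injective pos)
    (hposanc : ∀ x y, isAnc x y → pos x ≤ pos y)
    (hinterval : ∀ x y z, isAnc x y → pos x ≤ pos z → pos z ≤ pos y → isAnc x z)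
    (lca2 : V → V → V)
    (hlca2anc : ∀ u v, isAnc (lca2 u v) u ∧ isAnc (lca2 u v) v)
    (hlca2max : ∀ u v a, isAnc a u → isAnc a v → isAnc a (lca2 u v))
    (lcaF : Finset V → V)
    (hlcaFanc : ∀ W : Finset V, W.Nonempty → ∀ w ∈ W, isAnc (lcaF W) w)
    (hlcaFmax : ∀ W : Finset V, W.Nonempty → ∀ a, (∀ w ∈ W, isAnc a w) → isAnc a (lcaF W))
    (m : ℕ) (vs : Fin m → V)
    (hsorted : ∀ i j : Fin m, i < j → pos (vs i) < pos (vs j))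
    (W : Finset V) (hW : W ⊆ Finset.image vs Finset.univ) (hWne : W.Nonempty) :
    ((∃ i, ∃ hi : i + 1 < m,
        lcaF W = lca2 (vs ⟨i, Nat.lt_of_succ_lt hi⟩) (vs ⟨i + 1, hi⟩)) ∨
      (W.card = 1 ∧ lcaF W ∈ W)) ∧
    (∀ u ∈ W, ∀ w ∈ W, (∀ b ∈ W, pos u ≤ pos b) → (∀ b ∈ W, pos b ≤ pos w) →
      lcaF W = lca2 u w) := by
  have key : ∀ u ∈ W, ∀ w ∈ W, (∀ b ∈ W, pos u ≤ pos b) → (∀ b ∈ W, pos b ≤ pos w) →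
      lcaF W = lca2 u w := by
    intro u hu w hw hmin hmax
    have h1 : isAnc (lcaF W) (lca2 u w) :=
      hlca2max u w _ (hlcaFanc W hWne u hu) (hlcaFanc W hWne w hw)
    have h2 : isAnc (lca2 u w) (lcaF W) := by
      apply hlcaFmax W hWne
      intro b hb
      exact hinterval _ w b (hlca2anc u w).2
        (le_trans (hposanc _ u (hlca2anc u w).1) (hmin b hb)) (hmax b hb)
    exact hantisymm _ _ h1 h2
  refine ⟨?_, key⟩
  obtain ⟨u, hu, hmin⟩ := W.exists_min_image pos hWne
  obtain ⟨w, hw, hmax⟩ := W.exists_max_image pos hWne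
  by_cases huw : u = w
  · right
    have hWeq : W = {u} := by
      apply Finset.eq_singleton_iff_unique_mem.mpr
      refine ⟨hu, fun b hb => ?_⟩
      exact (hposinj (le_antisymm (huw ▸ hmax b hb) (hmin b hb))).symm ▸ rfl
    have hlfu : lcaF W = u := by
      apply hantisymm _ _ (hlcaFanc W hWne u hu)
      apply hlcaFmax W hWne
      intro b hb
      rw [hWeq] at hb
      simp at hb
      rw [hb]; exact hrefl u
    refine ⟨by rw [hWeq]; simp, by rw [hlfu]; exact hu⟩
  · left
    obtain ⟨i₀, -, hi₀⟩ := Finset.mem_image.mp (hW hu)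
    obtain ⟨j₀, -, hj₀⟩ := Finset.mem_image.mp (hW hw)
    have hm : 0 < m := i₀.pos
    have hpuw : pos u < pos w :=
      lt_of_le_of_ne (hmin w hw) (fun h => huw (hposinj h))
    have hij : (i₀ : Fin m) < j₀ := by
      rcases lt_trichotomy i₀ j₀ with h | h | h
      · exact h
      · exact absurd (by rw [← hi₀, ← hj₀, h]) huw
      · exact absurd (hi₀ ▸ hj₀ ▸ hsorted j₀ i₀ h) (not_lt.mpr hpuw.le)
    set v : ℕ → V := fun k => vs ⟨min k (m - 1), by omega⟩ with hvdef
    have hv : ∀ k (h : k < m), v k = vs ⟨k, h⟩ := fun k h =>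
      congrArg vs (Fin.ext (show min k (m - 1) = k by omega))
    have hsle : ∀ k l, k ≤ l → l < m → pos (v k) ≤ pos (v l) := by
      intro k l hkl hl
      rcases eq_or_lt_of_le hkl with h | h
      · rw [h]
      · rw [hv k (lt_trans h hl), hv l hl]
        exact (hsorted ⟨k, lt_trans h hl⟩ ⟨l, hl⟩ h).le
    have hvu : v i₀.val = u := by rw [hv _ i₀.isLt, Fin.eta]; exact hi₀
    have hvw : v j₀.val = w := by rw [hv _ j₀.isLt, Fin.eta]; exact hj₀
    have hijn : i₀.val < j₀.val := hij
    have hSne : (Finset.Ico i₀.val j₀.val).Nonempty := by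
      rw [Finset.nonempty_Ico]; exact hijn
    obtain ⟨k, hkmem, hminA⟩ :=
      (Finset.Ico i₀.val j₀.val).exists_min_image
        (fun l => pos (lca2 (v l) (v (l + 1)))) hSne
    simp only [Finset.mem_Ico] at hkmem
    obtain ⟨hk1, hk2⟩ := hkmem
    have hk1m : k + 1 < m := lt_of_le_of_lt hk2 j₀.isLt
    set A := lca2 (v k) (v (k + 1)) with hA
    set L := lca2 u w with hL
    have hminA' : ∀ l, i₀.val ≤ l → l < j₀.val → pos A ≤ pos (lca2 (v l) (v (l + 1))) := by
      intro l h1 h2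
      exact hminA l (Finset.mem_Ico.mpr ⟨h1, h2⟩)
    -- L is ancestor of every v l for i₀ ≤ l ≤ j₀
    have hLall : ∀ l, i₀.val ≤ l → l ≤ j₀.val → isAnc L (v l) := by
      intro l h1 h2
      have hlm : l < m := lt_of_le_of_lt h2 j₀.isLt
      apply hinterval L (v j₀.val) (v l) (hvw ▸ (hlca2anc u w).2)
      · calc pos L ≤ pos u := hposanc _ _ (hlca2anc u w).1
          _ = pos (v i₀.val) := by rw [hvu]
          _ ≤ pos (v l) := hsle _ _ h1 hlm
      · rw [hvw]
        exact hvw ▸ hsle l j₀.val h2 j₀.isLt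
    have hLA : isAnc L A :=
      hlca2max _ _ _ (hLall k hk1 (le_of_lt hk2)) (hLall (k + 1) (by omega) hk2)
    -- A is ancestor of v l for k ≤ l ≤ j₀ (upward)
    have hup : ∀ l, k + 1 ≤ l → l ≤ j₀.val → isAnc A (v l) := by
      intro l hl
      induction l, hl using Nat.le_induction with
      | base => intro _; exact (hlca2anc _ _).2
      | succ l hl ih =>
        intro hl2
        have ihl : isAnc A (v l) := ih (by omega)
        have hlm : l < m := by omega
        have hAAl : isAnc A (lca2 (v l) (v (l + 1))) := by
          apply hinterval A (v l) _ ihl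
          · exact hminA' l (by omega) (by omega)
          · exact hposanc _ _ (hlca2anc (v l) (v (l + 1))).1
        exact htrans _ _ _ hAAl (hlca2anc (v l) (v (l + 1))).2
    -- A is ancestor of v (k - d) (downward)
    have hdown : ∀ d, i₀.val ≤ k - d → isAnc A (v (k - d)) := by
      intro d
      induction d with
      | zero => intro _; exact (hlca2anc _ _).1
      | succ d ih =>
        intro h
        by_cases hd : k ≤ d
        · have he : k - (d + 1) = k - d := by omega
          rw [he]; exact ih (by omega)
        · have hj1 : (k - (d + 1)) + 1 = k - d := by omega
          set l := k - (d + 1) with hldef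
          have ihl : isAnc A (v (l + 1)) := by rw [hj1]; exact ih (by omega)
          have hAAl : isAnc A (lca2 (v l) (v (l + 1))) := by
            apply hinterval A (v (l + 1)) _ ihl
            · exact hminA' l h (by omega)
            · calc pos (lca2 (v l) (v (l + 1))) ≤ pos (v l) :=
                    hposanc _ _ (hlca2anc _ _).1
                _ ≤ pos (v (l + 1)) := hsle l (l + 1) (by omega) (by omega)
          exact htrans _ _ _ hAAl (hlca2anc (v l) (v (l + 1))).1
    have hAu : isAnc A u := by
      have := hdown (k - i₀.val) (by omega)
      rwa [show k - (k - i₀.val) = i₀.val by omega, hvu] at this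
    have hAw : isAnc A w := by
      have := hup j₀.val (by omega) le_rfl
      rwa [hvw] at this
    have hAL : isAnc A L := hlca2max _ _ _ hAu hAw
    have hALeq : L = A := hantisymm _ _ hLA hAL
    refine ⟨k, hk1m, ?_⟩
    rw [key u hu w hw hmin hmax, ← hL, hALeq, hA,
      hv k (by omega), hv (k + 1) hk1m]
end

section
/- The set V* = I ∪ {r} ∪ { LCA(v_i, v_{i+1}) : consecutive in preorder } is closed under pairwise LCA: for any u, w ∈ V*, LCA(u,w) ∈ V*. -/
/-- The set `V* = I ∪ {r} ∪ {LCA of preorder-consecutive pairs of I}` is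
closed under pairwise LCA. -/
theorem stmt_11 {V : Type*} [DecidableEq V]
    (isAnc : V → V → Prop)
    (hrefl : ∀ v, isAnc v v)
    (hantisymm : ∀ u v, isAnc u v → isAnc v u → u = v)
    (htrans : ∀ u v w, isAnc u v → isAnc v w → isAnc u w)
    (hchain : ∀ y a b, isAnc a y → isAnc b y → isAnc a b ∨ isAnc b a)
    (r : V) (hroot : ∀ v, isAnc r v)
    (pos : V → ℕ) (hposinj : Function.Injective pos)
    (hposanc : ∀ x y, isAnc x y → pos x ≤ pos y)
    (hinterval : ∀ x y z, isAnc x y → pos x ≤ pos z → pos z ≤ pos y → isAnc x z)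
    (lca2 : V → V → V)
    (hlca2anc : ∀ u v, isAnc (lca2 u v) u ∧ isAnc (lca2 u v) v)
    (hlca2max : ∀ u v a, isAnc a u → isAnc a v → isAnc a (lca2 u v))
    (m : ℕ) (vs : Fin m → V)
    (hsorted : ∀ i j : Fin m, i < j → pos (vs i) < pos (vs j))
    (Vstar : Finset V)
    (hVstar : Vstar = Finset.image vs Finset.univ ∪ {r} ∪
      Finset.image (fun i : Fin (m - 1) =>
        lca2 (vs ⟨i.1, by have := i.isLt; omega⟩)
             (vs ⟨i.1 + 1, by have := i.isLt; omega⟩)) Finset.univ) :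
    ∀ u ∈ Vstar, ∀ w ∈ Vstar, lca2 u w ∈ Vstar := by
  -- uniqueness characterization of lca2
  have hlcaeq : ∀ u w a, isAnc a u → isAnc a w →
      (∀ c, isAnc c u → isAnc c w → isAnc c a) → lca2 u w = a := by
    intro u w a h1 h2 h3
    exact hantisymm _ _ (h3 _ (hlca2anc u w).1 (hlca2anc u w).2) (hlca2max u w a h1 h2)
  have hself : ∀ u, lca2 u u = u :=
    fun u => hlcaeq u u u (hrefl u) (hrefl u) (fun c h _ => h)
  have hr1 : ∀ w, lca2 r w = r :=
    fun w => hlcaeq r w r (hrefl r) (hroot w) (fun c h _ => h)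
  have hr2 : ∀ u, lca2 u r = r :=
    fun u => hlcaeq u r r (hroot u) (hrefl r) (fun c _ h => h)
  have hmono : ∀ i j : Fin m, i ≤ j → pos (vs i) ≤ pos (vs j) := by
    intro i j h
    rcases eq_or_lt_of_le h with h | h
    · rw [h]
    · exact le_of_lt (hsorted i j h)
  -- interval property: lca2 (vs i) (vs j) is an ancestor of intermediate vertices
  have hA : ∀ i j t : Fin m, i ≤ t → t ≤ j → isAnc (lca2 (vs i) (vs j)) (vs t) := by
    intro i j t h1 h2
    exact hinterval _ (vs j) _ (hlca2anc (vs i) (vs j)).2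
      (le_trans (le_trans (hposanc _ _ (hlca2anc (vs i) (vs j)).1) (hmono i t h1)) le_rfl)
      (hmono t j h2)
  have hrmem : r ∈ Vstar := by
    rw [hVstar]; simp
  -- consecutive lcas are in Vstar
  have hcons : ∀ i j : Fin m, (j : ℕ) = (i : ℕ) + 1 → lca2 (vs i) (vs j) ∈ Vstar := by
    intro i j hj
    rw [hVstar]
    apply Finset.mem_union_right
    rw [Finset.mem_image]
    have hi : (i : ℕ) < m - 1 := by have := j.isLt; omega
    refine ⟨⟨(i : ℕ), hi⟩, Finset.mem_univ _, ?_⟩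
    congr 1 <;> exact congrArg vs (Fin.ext (by simp; omega))
  have hvsmem : ∀ i : Fin m, vs i ∈ Vstar := by
    intro i
    rw [hVstar]
    apply Finset.mem_union_left
    apply Finset.mem_union_left
    exact Finset.mem_image_of_mem vs (Finset.mem_univ i)
  -- key lemma: lca2 (vs i) (vs j) ∈ Vstar for i ≤ j
  have hD : ∀ d : ℕ, ∀ i j : Fin m, (j : ℕ) = (i : ℕ) + d → lca2 (vs i) (vs j) ∈ Vstar := by
    intro d
    induction d with
    | zero =>
      intro i j hj
      have : j = i := Fin.ext (by omega)
      rw [this, hself]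
      exact hvsmem i
    | succ d ih =>
      intro i j hj
      rcases Nat.eq_zero_or_pos d with hd | hd
      · exact hcons i j (by omega)
      · have hj' : (i : ℕ) + d < m := by have := j.isLt; omega
        set j' : Fin m := ⟨(i : ℕ) + d, hj'⟩ with hj'def
        have ha1 : lca2 (vs i) (vs j') ∈ Vstar := ih i j' rfl
        have hb : lca2 (vs j') (vs j) ∈ Vstar := hcons j' j (by simp [hj'def]; omega)
        have hij' : i ≤ j' := by simp [Fin.le_def, hj'def]
        have hj'j : j' ≤ j := by simp [Fin.le_def, hj'def]; omega
        have h1 : isAnc (lca2 (vs i) (vs j')) (vs j') := (hlca2anc _ _).2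
        have h2 : isAnc (lca2 (vs j') (vs j)) (vs j') := (hlca2anc _ _).1
        -- any common ancestor of vs i and vs j is an ancestor of vs j'
        have hcom : ∀ c, isAnc c (vs i) → isAnc c (vs j) → isAnc c (vs j') := by
          intro c hc1 hc2
          exact hinterval c (vs j) (vs j') hc2
            (le_trans (hposanc _ _ hc1) (hmono i j' hij')) (hmono j' j hj'j)
        rcases hchain (vs j') _ _ h1 h2 with h | h
        · have : lca2 (vs i) (vs j) = lca2 (vs i) (vs j') := by
            apply hlcaeq
            · exact (hlca2anc _ _).1
            · exact htrans _ _ _ h (hlca2anc (vs j') (vs j)).2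
            · intro c hc1 hc2
              exact hlca2max _ _ _ hc1 (hcom c hc1 hc2)
          rw [this]; exact ha1
        · have : lca2 (vs i) (vs j) = lca2 (vs j') (vs j) := by
            apply hlcaeq
            · exact htrans _ _ _ h (hlca2anc (vs i) (vs j')).1
            · exact (hlca2anc _ _).2
            · intro c hc1 hc2
              exact hlca2max _ _ _ (hcom c hc1 hc2) hc2
          rw [this]; exact hb
  -- decomposition of elements of Vstar
  have hdec : ∀ u ∈ Vstar, u = r ∨ ∃ i j : Fin m, i ≤ j ∧ u = lca2 (vs i) (vs j) := by
    intro u hu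
    rw [hVstar] at hu
    rcases Finset.mem_union.1 hu with hu | hu
    · rcases Finset.mem_union.1 hu with hu | hu
      · rcases Finset.mem_image.1 hu with ⟨i, _, hi⟩
        exact Or.inr ⟨i, i, le_refl i, by rw [← hi, hself]⟩
      · exact Or.inl (Finset.mem_singleton.1 hu)
    · rcases Finset.mem_image.1 hu with ⟨k, _, hk⟩
      refine Or.inr ⟨⟨k.1, by have := k.isLt; omega⟩, ⟨k.1 + 1, by have := k.isLt; omega⟩,
        by simp [Fin.le_def], hk.symm⟩
  -- main argument
  intro u hu w hw
  rcases hdec u hu with rfl | ⟨i, j, hij, rfl⟩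
  · rw [hr1]; exact hrmem
  rcases hdec w hw with rfl | ⟨k, l, hkl, rfl⟩
  · rw [hr2]; exact hrmem
  have key : lca2 (lca2 (vs i) (vs j)) (lca2 (vs k) (vs l)) =
      lca2 (vs (min i k)) (vs (max j l)) := by
    apply hlcaeq
    · exact hlca2max _ _ _
        (hA (min i k) (max j l) i (min_le_left i k) (le_trans hij (le_max_left j l)))
        (hA (min i k) (max j l) j (le_trans (min_le_left i k) hij) (le_max_left j l))
    · exact hlca2max _ _ _
        (hA (min i k) (max j l) k (min_le_right i k) (le_trans hkl (le_max_right j l)))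
        (hA (min i k) (max j l) l (le_trans (min_le_right i k) hkl) (le_max_right j l))
    · intro c hc1 hc2
      have hci : isAnc c (vs i) := htrans _ _ _ hc1 (hlca2anc _ _).1
      have hcj : isAnc c (vs j) := htrans _ _ _ hc1 (hlca2anc _ _).2
      have hck : isAnc c (vs k) := htrans _ _ _ hc2 (hlca2anc _ _).1
      have hcl : isAnc c (vs l) := htrans _ _ _ hc2 (hlca2anc _ _).2
      apply hlca2max
      · rcases min_cases i k with ⟨h, _⟩ | ⟨h, _⟩ <;> rw [h]
        exacts [hci, hck]
      · rcases max_cases j l with ⟨h, _⟩ | ⟨h, _⟩ <;> rw [h]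
        exacts [hcj, hcl]
  rw [key]
  have : (max j l : ℕ) = (min i k : ℕ) + ((max j l : ℕ) - (min i k : ℕ)) := by
    have h1 : min i k ≤ max j l :=
      le_trans (min_le_left i k) (le_trans hij (le_max_left j l))
    have := Fin.le_def.1 h1
    omega
  exact hD _ _ _ this
end

section
/- Replacing a non-LCA zero-weight vertex by a better descendant does not decrease the summary score: if v ∈ V has feq(v) = 0, and u = LCA(I ∩ des(v)) (assumed nonempty), then for every set S ⊆ V with v ∈ S, g((S \ {v}) ∪ {u}) ≥ g(S). -/
/-- Replacing a non-LCA zero-weight vertex `v` by the LCA `u` of the important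
vertices below it does not decrease the summary score:
`g((S \ {v}) ∪ {u}) ≥ g(S)` for any `S` containing `v`. -/
theorem stmt_12 {V : Type*} [Fintype V] [DecidableEq V]
    (anc des : V → Finset V) (hancdes : ∀ x y, y ∈ des x ↔ x ∈ anc y)
    (l : V → ℕ) (hl : ∀ x y, x ∈ anc y → l x ≤ l y)
    (feq : V → NNReal)
    (I : Finset V) (hI : ∀ y, y ∈ I ↔ 0 < feq y)
    (rep : V → V → NNReal)
    (hrep : ∀ x y, rep x y =
      if x ∈ anc y then feq y / ((l y - l x + 1 : ℕ) : NNReal) else 0)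
    (g : Finset V → NNReal)
    (hg : ∀ S : Finset V, g S = ∑ y ∈ I, (S ∩ anc y).sup (fun x => rep x y))
    (v u : V) (hv : feq v = 0)
    (hne : (I ∩ des v).Nonempty)
    (hud : u ∈ des v)
    (hua : ∀ y ∈ I ∩ des v, u ∈ anc y)
    (hlca : ∀ a, (∀ y ∈ I ∩ des v, a ∈ anc y) → a ∈ anc u)
    (S : Finset V) (hvS : v ∈ S) :
    g S ≤ g (insert u (S.erase v)) := by
  rw [hg, hg]
  apply Finset.sum_le_sum
  intro y hy
  apply Finset.sup_le
  intro x hx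
  rw [Finset.mem_inter] at hx
  obtain ⟨hxS, hxy⟩ := hx
  by_cases hxv : x = v
  · subst hxv
    -- y is an important descendant of v
    have hyd : y ∈ I ∩ des x := Finset.mem_inter.mpr ⟨hy, (hancdes x y).mpr hxy⟩
    have huy : u ∈ anc y := hua y hyd
    have hvu : x ∈ anc u := (hancdes x u).mp hud
    have hlvu : l x ≤ l u := hl x u hvu
    have hluy : l u ≤ l y := hl u y huy
    have h1 : rep x y ≤ rep u y := by
      rw [hrep, hrep, if_pos hxy, if_pos huy]
      apply div_le_div_of_nonneg_left ?_ ?_ ?_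
      · exact ((hI y).mp hy).le
      · positivity
      · exact_mod_cast Nat.succ_le_succ (Nat.sub_le_sub_left hlvu (l y))
    refine h1.trans (Finset.le_sup (f := fun x => rep x y) ?_)
    exact Finset.mem_inter.mpr ⟨Finset.mem_insert_self u _, huy⟩
  · refine Finset.le_sup (f := fun x => rep x y) ?_
    exact Finset.mem_inter.mpr ⟨Finset.mem_insert_of_mem (Finset.mem_erase.mpr ⟨hxv, hxS⟩), hxy⟩
end

section
/- Optimal substructure of the Yes-case: for a subtree T_u rooted at u with children x₁,…,x_l, a budget k ≥ 1, and a fixed outside set S disjoint from des(u), the maximum over all S_u ⊆ des(u) \ {u} with |S_u| = k−1 of g_{T_u}(S ∪ {u} ∪ S_u) equals feq(u) + max over (k₁,…,k_l) with Σ k_i = k−1 of Σ_i [max over S_i ⊆ des(x_i), |S_i| = k_i of g_{T_{x_i}}(S ∪ {u} ∪ S_i)]. -/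
/-!
Selecting `u` pins the score of `u` itself at `feq u`, the maximum possible. For a descendant `y`
of a child `xᵢ`, the selected ancestors of `y` inside `des u` lie in `{u} ∪ des xᵢ`, so the score
of `y` only sees `u`, the outside set `S` and the part `Sᵤ ∩ des xᵢ`. Hence the objective splits
as `feq u + ∑ᵢ g_{T_{xᵢ}}(S ∪ {u} ∪ (Sᵤ ∩ des xᵢ))`, and maximising a sum of monotone functions of
the traces of `Sᵤ` on disjoint blocks is the same as distributing the budget among the blocks.
-/

open Finset Function

namespace Finset

variable {α M : Type*}

lemma exists_subset_card_le_sup_powersetCard_le [LinearOrder M] [OrderBot M]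
    (s : Finset α) (n : ℕ) (f : Finset α → M) :
    ∃ t ⊆ s, #t ≤ n ∧ (s.powersetCard n).sup f ≤ f t := by
  rcases (s.powersetCard n).eq_empty_or_nonempty with h | h
  · exact ⟨∅, empty_subset s, Nat.zero_le n, by simp [h]⟩
  · obtain ⟨t, ht, hsup⟩ := exists_mem_eq_sup _ h f
    obtain ⟨hts, hcard⟩ := mem_powersetCard.1 ht
    exact ⟨t, hts, hcard.le, hsup.le⟩

variable [DecidableEq α]

lemma sum_card_inter_eq_card {ι : Type*} [Fintype ι] {t : ι → Finset α}
    (ht : Pairwise (Disjoint on t)) {s : Finset α} (hs : s ⊆ univ.biUnion t) :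
    ∑ i, #(s ∩ t i) = #s := by
  rw [← card_biUnion fun i _ j _ hij => (ht hij).mono inter_subset_right inter_subset_right,
    ← inter_biUnion, inter_eq_left.2 hs]

variable [AddCommMonoid M] [LinearOrder M] [IsOrderedAddMonoid M] [OrderBot M]
  {l n : ℕ} {t : Fin l → Finset α} {f : Fin l → Finset α → M}

lemma sup_powersetCard_sum_inter_le (ht : Pairwise (Disjoint on t)) :
    ((univ.biUnion t).powersetCard n).sup (fun s => ∑ i, f i (s ∩ t i)) ≤
      (Nat.antidiagonalTuple l n).sup (fun κ => ∑ i, ((t i).powersetCard (κ i)).sup (f i)) := by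
  refine Finset.sup_le fun s hs => ?_
  obtain ⟨hst, hcard⟩ := mem_powersetCard.1 hs
  have hκ : (fun i => #(s ∩ t i)) ∈ Nat.antidiagonalTuple l n := by
    rw [Nat.mem_antidiagonalTuple, sum_card_inter_eq_card ht hst, hcard]
  refine le_trans (sum_le_sum fun i _ => ?_) (le_sup (f := fun κ => ∑ i, _) hκ)
  exact le_sup (mem_powersetCard.2 ⟨inter_subset_right, rfl⟩)

lemma le_sup_powersetCard_sum_inter (hf : ∀ i, Monotone (f i)) (hn : n ≤ #(univ.biUnion t)) :
    (Nat.antidiagonalTuple l n).sup (fun κ => ∑ i, ((t i).powersetCard (κ i)).sup (f i)) ≤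
      ((univ.biUnion t).powersetCard n).sup (fun s => ∑ i, f i (s ∩ t i)) := by
  refine Finset.sup_le fun κ hκ => ?_
  -- A block too small for its share `κ i` contributes `⊥`; padding the union of the chosen
  -- sets up to size `n` is harmless by monotonicity.
  choose r hrt hrκ hr using fun i => exists_subset_card_le_sup_powersetCard_le (t i) (κ i) (f i)
  have hr_sub : univ.biUnion r ⊆ univ.biUnion t := biUnion_mono fun i _ => hrt i
  have hr_card : #(univ.biUnion r) ≤ n :=
    card_biUnion_le.trans <| (sum_le_sum fun i _ => hrκ i).trans (Nat.mem_antidiagonalTuple.1 hκ).le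
  obtain ⟨s, hrs, hst, hs⟩ := exists_subsuperset_card_eq hr_sub hr_card hn
  refine le_trans (sum_le_sum fun i _ => (hr i).trans (hf i ?_))
    (le_sup (f := fun s => ∑ i, f i (s ∩ t i)) (mem_powersetCard.2 ⟨hst, hs⟩))
  exact subset_inter (fun z hz => hrs (mem_biUnion.2 ⟨i, mem_univ i, hz⟩)) (hrt i)

theorem sup_powersetCard_sum_inter_eq (ht : Pairwise (Disjoint on t)) (hf : ∀ i, Monotone (f i))
    (hn : n ≤ #(univ.biUnion t)) :
    ((univ.biUnion t).powersetCard n).sup (fun s => ∑ i, f i (s ∩ t i)) =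
      (Nat.antidiagonalTuple l n).sup (fun κ => ∑ i, ((t i).powersetCard (κ i)).sup (f i)) :=
  le_antisymm (sup_powersetCard_sum_inter_le ht) (le_sup_powersetCard_sum_inter hf hn)

end Finset

lemma sup_mul_eq_of_le_one {ι : Type*} {s : Finset ι} {w : ι → NNReal} (hw : ∀ z, w z ≤ 1)
    {a : ι} (ha : a ∈ s) (hwa : w a = 1) (c : NNReal) :
    s.sup (fun z => c * w z) = c :=
  le_antisymm (Finset.sup_le fun z _ => mul_le_of_le_one_right' (hw z))
    (by simpa [hwa] using le_sup (f := fun z => c * w z) ha)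

lemma union_insert_inter_eq {α : Type*} [DecidableEq α] {S T B C D : Finset α} {u : α}
    (hT : T ⊆ D.erase u) (hB : B ∩ D ⊆ insert u C) :
    (S ∪ insert u T) ∩ B = (insert u S ∪ (T ∩ C)) ∩ B := by
  ext z
  have hTz := @hT z
  have hBz := @hB z
  grind

theorem stmt_14_general {V : Type*} [DecidableEq V]
    (anc des : V → Finset V) (hancrefl : ∀ y, y ∈ anc y)
    (feq : V → NNReal)
    (cor : V → V → NNReal)
    (hcorle : ∀ x y, cor x y ≤ 1) (hcor1 : ∀ y, cor y y = 1)
    (smy : Finset V → V → NNReal)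
    (hsmy : ∀ A y, smy A y = (A ∩ anc y).sup (fun z => feq y * cor z y))
    (gT : V → Finset V → NNReal)
    (hgT : ∀ w A, gT w A = ∑ y ∈ des w, smy A y)
    (u : V) (l : ℕ) (child : Fin l → V)
    (hdesu : des u = insert u (Finset.univ.biUnion (fun i : Fin l => des (child i))))
    (hunot : u ∉ Finset.univ.biUnion (fun i : Fin l => des (child i)))
    (hdisj : ∀ i j : Fin l, i ≠ j → Disjoint (des (child i)) (des (child j)))
    (hkey : ∀ i : Fin l, ∀ y ∈ des (child i), anc y ∩ des u ⊆ insert u (des (child i)))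
    (S : Finset V)
    (k : ℕ) (hk' : k - 1 ≤ ((des u).erase u).card) :
    (((des u).erase u).powersetCard (k - 1)).sup (fun Su => gT u (S ∪ insert u Su)) =
      feq u + (Finset.Nat.antidiagonalTuple l (k - 1)).sup (fun κ =>
        ∑ i : Fin l,
          ((des (child i)).powersetCard (κ i)).sup
            (fun Si => gT (child i) (insert u S ∪ Si))) := by
  have herase : (des u).erase u = univ.biUnion fun i => des (child i) := by
    rw [hdesu, erase_insert hunot]
  have hsplit : ∀ Su ⊆ (des u).erase u, gT u (S ∪ insert u Su) =
      feq u + ∑ i, gT (child i) (insert u S ∪ (Su ∩ des (child i))) := by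
    intro Su hSu
    rw [hgT, hdesu, sum_insert hunot, sum_biUnion fun i _ j _ hij => hdisj i j hij, hsmy,
      sup_mul_eq_of_le_one (hcorle · u) (by simp [hancrefl]) (hcor1 u)]
    refine congrArg _ (sum_congr rfl fun i _ => ?_)
    rw [hgT]
    refine sum_congr rfl fun y hy => ?_
    rw [hsmy, hsmy, union_insert_inter_eq hSu (hkey i y hy)]
  have hmono : ∀ i, Monotone fun Si => gT (child i) (insert u S ∪ Si) := fun i A B hAB => by
    simp only [hgT, hsmy]
    exact sum_le_sum fun y _ => sup_mono (inter_subset_inter (union_subset_union_right hAB) le_rfl)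
  calc _ = (((des u).erase u).powersetCard (k - 1)).sup
          (fun Su => feq u + ∑ i, gT (child i) (insert u S ∪ (Su ∩ des (child i)))) :=
        sup_congr rfl fun Su hSu => hsplit Su (mem_powersetCard.1 hSu).1
    _ = _ := by
      rw [← Finset.add_sup (powersetCard_nonempty.2 hk'), herase,
        sup_powersetCard_sum_inter_eq hdisj hmono (herase ▸ hk')]

/-- Optimal substructure of the Yes-case of the DP: for a subtree rooted at `u`
with children `x₁,…,x_l`, budget `k ≥ 1`, and an outside set `S` disjoint from
`des u`, the best score over `S_u ⊆ des u \ {u}` with `|S_u| = k−1` of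
`g_{T_u}(S ∪ {u} ∪ S_u)` equals `feq u` plus the best split of budget `k−1`
among the children subtrees (with `u` selected). -/
theorem stmt_14 {V : Type*} [Fintype V] [DecidableEq V]
    (anc des : V → Finset V) (hancrefl : ∀ y, y ∈ anc y)
    (feq : V → NNReal)
    (cor : V → V → NNReal) (hcor : ∀ x y, x ∉ anc y → cor x y = 0)
    (hcorle : ∀ x y, cor x y ≤ 1) (hcor1 : ∀ y, cor y y = 1)
    (smy : Finset V → V → NNReal)
    (hsmy : ∀ A y, smy A y = (A ∩ anc y).sup (fun z => feq y * cor z y))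
    (gT : V → Finset V → NNReal)
    (hgT : ∀ w A, gT w A = ∑ y ∈ des w, smy A y)
    (u : V) (l : ℕ) (child : Fin l → V)
    (hdesu : des u = insert u (Finset.univ.biUnion (fun i : Fin l => des (child i))))
    (hunot : u ∉ Finset.univ.biUnion (fun i : Fin l => des (child i)))
    (hdisj : ∀ i j : Fin l, i ≠ j → Disjoint (des (child i)) (des (child j)))
    (hkey : ∀ i : Fin l, ∀ y ∈ des (child i), anc y ∩ des u ⊆ insert u (des (child i)))
    (S : Finset V) (hS : S ∩ des u = ∅)
    (k : ℕ) (hk : 1 ≤ k) (hk' : k - 1 ≤ ((des u).erase u).card) :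
    (((des u).erase u).powersetCard (k - 1)).sup (fun Su => gT u (S ∪ insert u Su)) =
      feq u + (Finset.Nat.antidiagonalTuple l (k - 1)).sup (fun κ =>
        ∑ i : Fin l,
          ((des (child i)).powersetCard (κ i)).sup
            (fun Si => gT (child i) (insert u S ∪ Si))) :=
  stmt_14_general anc des hancrefl feq cor hcorle hcor1 smy hsmy gT hgT u l child hdesu hunot hdisj
    hkey S k hk'
end

section
/- The summary score of a set S depends on each vertex only through its nearest selected ancestor: if S₁, S₂ ⊆ V and a vertex y has the same nearest ancestor in S₁ ∩ anc(y) and S₂ ∩ anc(y) (or both intersections are empty), then smy_{S₁}(y) = smy_{S₂}(y), provided the correlation function cor_x(y) is nonincreasing in the distance l(y) − l(x) between y and its ancestor x. -/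
/-- The summary score of a vertex depends only on its nearest selected
ancestor, provided the correlation is nonincreasing in level difference:
if `y` has the same nearest ancestor in `S₁ ∩ anc y` and `S₂ ∩ anc y`
(or both intersections are empty), then `smy_{S₁}(y) = smy_{S₂}(y)`. -/
theorem stmt_18 {V : Type*} [DecidableEq V]
    (anc : V → Finset V) (l : V → ℕ)
    (hl : ∀ x y, x ∈ anc y → l x ≤ l y)
    (hchain : ∀ y a b, a ∈ anc y → b ∈ anc y → a ∈ anc b ∨ b ∈ anc a)
    (feq : V → NNReal) (c : ℕ → NNReal) (hc : Antitone c)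
    (smy : Finset V → V → NNReal)
    (hsmy : ∀ S y, smy S y = (S ∩ anc y).sup (fun x => feq y * c (l y - l x)))
    (S₁ S₂ : Finset V) (y : V)
    (hnear : (∃ z, z ∈ S₁ ∩ anc y ∧ z ∈ S₂ ∩ anc y ∧
        (∀ x ∈ S₁ ∩ anc y, l x ≤ l z) ∧ (∀ x ∈ S₂ ∩ anc y, l x ≤ l z)) ∨
      (S₁ ∩ anc y = ∅ ∧ S₂ ∩ anc y = ∅)) :
    smy S₁ y = smy S₂ y := by
  rw [hsmy, hsmy]
  rcases hnear with ⟨z, hz1, hz2, hmax1, hmax2⟩ | ⟨h1, h2⟩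
  · have key : ∀ (T : Finset V), z ∈ T → (∀ x ∈ T, l x ≤ l z) →
        T.sup (fun x => feq y * c (l y - l x)) = feq y * c (l y - l z) := by
      intro T hzT hmax
      refine le_antisymm (Finset.sup_le fun x hx => ?_) (Finset.le_sup (f := fun x => feq y * c (l y - l x)) hzT)
      exact mul_le_mul_right (hc (tsub_le_tsub_left (hmax x hx) _)) _
    rw [key _ hz1 hmax1, key _ hz2 hmax2]
  · rw [h1, h2]
end
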